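/- In the parallel coupon collector problem with N ≥ 2 coupon types and C ≥ 1 collectors, setting t₀ = log(C/log 2) / log(N/(N−1)), every natural number t with t ≤ t₀ satisfies P(T(N, C) ≥ t) ≥ 1/2; consequently E[T(N, C)] ≥ t₀/2 = log(C/log 2) / (2·log(N/(N−1))). -/

import Mathlib

open MeasureTheory ProbabilityTheory
open scoped ENNReal

/-- The cover time of the parallel coupon collector problem: the first round
`t` by which each of the `C` collectors has collected each of the `N` coupon
types (`ω s c` is the coupon type picked by collector `c` in round `s`). -/
noncomputable def coverTime {N C : ℕ} (ω : ℕ → Fin C → Fin N) : ℕ :=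
  sInf {t | ∀ c : Fin C, ∀ x : Fin N, ∃ s < t, ω s c = x}

/-- `μ` is the law of the picks in the parallel coupon collector problem with
`N` coupon types and `C` collectors: the picks of different rounds are
independent, and in each round the joint pick of the `C` collectors is uniform
among all `N ^ C` possibilities (equivalently, each collector independently
picks a coupon type uniformly at random). -/
def IsCouponMeasure {N C : ℕ} (μ : MeasureTheory.Measure (ℕ → Fin C → Fin N)) : Prop :=
  MeasureTheory.IsProbabilityMeasure μ ∧
    ProbabilityTheory.iIndepFun (fun t ω => ω t) μ ∧
    ∀ t : ℕ, ∀ f : Fin C → Fin N, μ {ω | ω t = f} = ((N : ENNReal) ^ C)⁻¹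

/-! After `u` rounds a single collector has seen every type with probability
`p u = #{surjections Fin u → Fin N} / N ^ u ≤ 1 - (1 - 1/N) ^ u`, and the collectors are
independent, so all of them are done with probability `p u ^ C ≤ exp (-C (1 - 1/N) ^ u)`,
which is at most `1/2` exactly when `u ≤ t₀`. Because `coverTime` is `sInf ∅ = 0` on the
event that some collector misses some type forever, this event must be shown to be null;
it is, since a union bound over the types gives `p u ≥ 1 - N (1 - 1/N) ^ u → 1`.
Hence `P(T > u) ≥ 1/2` for `u ≤ t₀`, and taking `u = ⌊t₀⌋` gives
`E[T] ≥ (⌊t₀⌋ + 1) / 2 ≥ t₀ / 2`. -/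

open Finset Function Filter Topology

section IIDUniform

variable {α : Type*} [Fintype α] [MeasurableSpace α] [MeasurableSingletonClass α]
  {μ : Measure (ℕ → α)}

theorem measure_preimage_prefix_singleton (hind : iIndepFun (fun t ω => ω t) μ)
    (hunif : ∀ t a, μ {ω | ω t = a} = (Fintype.card α : ℝ≥0∞)⁻¹) {u : ℕ}
    (f : Fin u → α) :
    μ ((fun ω (s : Fin u) => ω s) ⁻¹' {f}) = (Fintype.card α : ℝ≥0∞)⁻¹ ^ u := by
  have hset : (fun ω (s : Fin u) => ω s) ⁻¹' {f}
      = ⋂ s ∈ (univ : Finset (Fin u)), (fun ω : ℕ → α => ω s) ⁻¹' {f s} := by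
    ext ω; simp [funext_iff]
  rw [hset, (hind.precomp Fin.val_injective).measure_inter_preimage_eq_mul _
    fun s _ => measurableSet_singleton (f s)]
  simp [Set.preimage, hunif]

theorem measure_preimage_prefix (hind : iIndepFun (fun t ω => ω t) μ)
    (hunif : ∀ t a, μ {ω | ω t = a} = (Fintype.card α : ℝ≥0∞)⁻¹) {u : ℕ}
    (A : Finset (Fin u → α)) :
    μ ((fun ω (s : Fin u) => ω s) ⁻¹' A) = #A * (Fintype.card α : ℝ≥0∞)⁻¹ ^ u := by
  have hmeas : Measurable fun (ω : ℕ → α) (s : Fin u) => ω s :=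
    measurable_pi_lambda _ fun s => measurable_pi_apply _
  rw [← sum_measure_preimage_singleton A fun f _ => hmeas (measurableSet_singleton f)]
  simp only [measure_preimage_prefix_singleton hind hunif, sum_const, nsmul_eq_mul]

end IIDUniform

section Surjections

variable {α β : Type*} [Fintype α] [Fintype β] [DecidableEq α] [DecidableEq β]

theorem card_piFinset_compl_singleton (b : β) :
    #(Fintype.piFinset fun _ : α => ({b}ᶜ : Finset β)) =
      (Fintype.card β - 1) ^ Fintype.card α := by
  simp [Fintype.card_piFinset, card_compl]

theorem card_surjective_add_le [Nonempty β] :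
    #{f : α → β | Surjective f} + (Fintype.card β - 1) ^ Fintype.card α ≤
      Fintype.card β ^ Fintype.card α := by
  obtain ⟨b⟩ := ‹Nonempty β›
  have hdisj : Disjoint ({f | Surjective f} : Finset (α → β))
      (Fintype.piFinset fun _ : α => ({b}ᶜ : Finset β)) := by
    refine disjoint_left.2 fun f hf hb => ?_
    obtain ⟨a, ha⟩ := (mem_filter.1 hf).2 b
    simpa [ha] using Fintype.mem_piFinset.1 hb a
  rw [← card_piFinset_compl_singleton b, ← card_union_of_disjoint hdisj, ← Fintype.card_fun]
  exact card_le_univ _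

theorem pow_le_card_surjective_add :
    Fintype.card β ^ Fintype.card α ≤
      #{f : α → β | Surjective f} +
        Fintype.card β * (Fintype.card β - 1) ^ Fintype.card α := by
  have hcover : (univ : Finset (α → β)) ⊆ ({f | Surjective f} : Finset (α → β)) ∪
      univ.biUnion fun b => Fintype.piFinset fun _ : α => ({b}ᶜ : Finset β) := by
    intro f _
    by_cases hf : Surjective f
    · simp [hf]
    · obtain ⟨b, hb⟩ := not_forall.1 hf
      refine mem_union_right _ <|
        mem_biUnion.2 ⟨b, mem_univ _, Fintype.mem_piFinset.2 fun a => ?_⟩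
      simpa using fun h => hb ⟨a, h⟩
  calc Fintype.card β ^ Fintype.card α = #(univ : Finset (α → β)) := by simp
    _ ≤ _ := (card_le_card hcover).trans (card_union_le _ _)
    _ ≤ _ := by
      gcongr
      refine card_biUnion_le.trans (le_of_eq ?_)
      simp only [card_piFinset_compl_singleton, sum_const, card_univ, smul_eq_mul]

end Surjections

noncomputable def coverProb (N u : ℕ) : ℝ := #{h : Fin u → Fin N | Surjective h} / N ^ u

section CoverProb

variable {N : ℕ}

theorem coverProb_nonneg (u : ℕ) : 0 ≤ coverProb N u := by
  unfold coverProb; positivity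

theorem coverProb_le (hN : 0 < N) (u : ℕ) : coverProb N u ≤ 1 - ((N - 1) / N) ^ u := by
  have : NeZero N := ⟨hN.ne'⟩
  have hcount := card_surjective_add_le (α := Fin u) (β := Fin N)
  simp only [Fintype.card_fin] at hcount
  have hpos : (0 : ℝ) < N ^ u := by positivity
  rw [coverProb, div_pow, one_sub_div hpos.ne', div_le_div_iff_of_pos_right hpos,
    le_sub_iff_add_le, ← Nat.cast_pred hN]
  exact_mod_cast hcount

theorem one_sub_mul_le_coverProb (hN : 0 < N) (u : ℕ) :
    1 - N * ((N - 1) / N) ^ u ≤ coverProb N u := by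
  have hcount := pow_le_card_surjective_add (α := Fin u) (β := Fin N)
  simp only [Fintype.card_fin] at hcount
  have hpos : (0 : ℝ) < N ^ u := by positivity
  rw [coverProb, div_pow, mul_div_assoc', one_sub_div hpos.ne', div_le_div_iff_of_pos_right hpos,
    sub_le_iff_le_add, ← Nat.cast_pred hN]
  exact_mod_cast hcount

theorem tendsto_coverProb (hN : 0 < N) : Tendsto (coverProb N) atTop (𝓝 1) := by
  have hN' : (1 : ℝ) ≤ N := Nat.one_le_cast.2 hN
  have hr0 : (0 : ℝ) ≤ (N - 1) / N := div_nonneg (by linarith) (by linarith)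
  have hlower : Tendsto (fun u : ℕ => 1 - N * (((N : ℝ) - 1) / N) ^ u) atTop (𝓝 1) := by
    simpa using ((tendsto_pow_atTop_nhds_zero_of_lt_one hr0
      ((div_lt_one (by linarith)).2 (by linarith))).const_mul (N : ℝ)).const_sub 1
  refine tendsto_of_tendsto_of_tendsto_of_le_of_le hlower tendsto_const_nhds
    (one_sub_mul_le_coverProb hN) fun u => (coverProb_le hN u).trans ?_
  linarith [pow_nonneg hr0 u]

end CoverProb

noncomputable def couponThreshold (N C : ℕ) : ℝ :=
  Real.log ((C : ℝ) / Real.log 2) / Real.log ((N : ℝ) / ((N : ℝ) - 1))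

section Threshold

variable {N C : ℕ}

theorem couponThreshold_nonneg (hN : 2 ≤ N) (hC : 1 ≤ C) : 0 ≤ couponThreshold N C := by
  have hN' : (2 : ℝ) ≤ N := by exact_mod_cast hN
  have hlog2 : Real.log 2 ≤ C := by
    linarith [Real.log_le_sub_one_of_pos two_pos, (Nat.one_le_cast (α := ℝ)).2 hC]
  refine div_nonneg (Real.log_nonneg ?_) (Real.log_nonneg ?_)
  · rwa [one_le_div (Real.log_pos one_lt_two)]
  · rw [one_le_div (by linarith)]; linarith

theorem log_two_le_mul_pow (hN : 2 ≤ N) (hC : 1 ≤ C) {u : ℕ}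
    (hu : (u : ℝ) ≤ couponThreshold N C) : Real.log 2 ≤ C * (((N : ℝ) - 1) / N) ^ u := by
  have hN' : (2 : ℝ) ≤ N := by exact_mod_cast hN
  have hC' : (0 : ℝ) < C := by exact_mod_cast hC
  have hlog2 : 0 < Real.log 2 := Real.log_pos one_lt_two
  have hratio : 1 < (N : ℝ) / (N - 1) := by rw [one_lt_div (by linarith)]; linarith
  have hpow : ((N : ℝ) / (N - 1)) ^ u ≤ C / Real.log 2 := by
    rw [← Real.log_le_log_iff (by positivity) (by positivity), Real.log_pow,
      ← le_div_iff₀ (Real.log_pos hratio)]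
    exact hu
  rw [← inv_div, inv_pow, ← div_eq_mul_inv, le_div_iff₀ (by positivity)]
  rwa [le_div_iff₀ hlog2, mul_comm] at hpow

theorem one_sub_pow_le_half {x : ℝ} (hx : x ≤ 1) (h : Real.log 2 ≤ C * x) :
    (1 - x) ^ C ≤ 1 / 2 :=
  calc (1 - x) ^ C ≤ Real.exp (-x) ^ C :=
        pow_le_pow_left₀ (by linarith) (Real.one_sub_le_exp_neg x) C
    _ = Real.exp (-(C * x)) := by rw [← Real.exp_nat_mul]; ring_nf
    _ ≤ Real.exp (-Real.log 2) := Real.exp_le_exp.2 (by linarith)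
    _ = 1 / 2 := by rw [Real.exp_neg, Real.exp_log two_pos, one_div]

end Threshold

section Coupon

variable {N C : ℕ}

def coveredBy (u : ℕ) : Set (ℕ → Fin C → Fin N) := {ω | ∀ c x, ∃ s < u, ω s c = x}

theorem coveredBy_mono : Monotone (coveredBy : ℕ → Set (ℕ → Fin C → Fin N)) :=
  fun _ _ huv _ hω c x =>
    let ⟨s, hs, hsx⟩ := hω c x
    ⟨s, hs.trans_le huv, hsx⟩

theorem coveredBy_eq_preimage (u : ℕ) :
    (coveredBy u : Set (ℕ → Fin C → Fin N)) = (fun ω (s : Fin u) => ω s) ⁻¹'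
      ↑({f | ∀ c, Surjective fun s => f s c} : Finset (Fin u → Fin C → Fin N)) := by
  ext ω
  simp [coveredBy, Surjective, Fin.exists_iff]

theorem card_forall_surjective (u : ℕ) :
    #({f | ∀ c, Surjective fun s => f s c} : Finset (Fin u → Fin C → Fin N)) =
      #({h | Surjective h} : Finset (Fin u → Fin N)) ^ C := by
  have e : {f : Fin u → Fin C → Fin N // ∀ c, Surjective fun s => f s c} ≃
      (Fin C → {h : Fin u → Fin N // Surjective h}) :=
    (Equiv.subtypeEquiv (Equiv.piComm _) fun _ => Iff.rfl).trans Equiv.subtypePiEquivPi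
  rw [← Fintype.card_subtype, ← Fintype.card_subtype, Fintype.card_congr e, Fintype.card_fun,
    Fintype.card_fin]

theorem measurableSet_coveredBy (u : ℕ) :
    MeasurableSet (coveredBy u : Set (ℕ → Fin C → Fin N)) := by
  rw [coveredBy_eq_preimage]
  exact (measurable_pi_lambda _ fun s => measurable_pi_apply _) (Set.toFinite _).measurableSet

theorem lt_coverTime {ω : ℕ → Fin C → Fin N} {u M : ℕ} (hM : ω ∈ coveredBy M)
    (hu : ω ∉ coveredBy u) : u < coverTime ω :=
  lt_of_not_ge fun h =>
    hu (coveredBy_mono h (Nat.sInf_mem (s := {t | ω ∈ coveredBy t}) ⟨M, hM⟩))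

end Coupon

namespace IsCouponMeasure

variable {N C : ℕ} {μ : Measure (ℕ → Fin C → Fin N)}

theorem measureReal_coveredBy (hμ : IsCouponMeasure μ) (u : ℕ) :
    μ.real (coveredBy u) = coverProb N u ^ C := by
  have hunif : ∀ t f, μ {ω | ω t = f} =
      (Fintype.card (Fin C → Fin N) : ℝ≥0∞)⁻¹ := by
    simpa using hμ.2.2
  rw [measureReal_def, coveredBy_eq_preimage, measure_preimage_prefix hμ.2.1 hunif,
    card_forall_surjective, coverProb]
  simp [mul_pow, inv_pow, ← pow_mul, mul_comm u C, div_eq_mul_inv]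

theorem ae_exists_mem_coveredBy (hμ : IsCouponMeasure μ) (hN : 0 < N) :
    ∀ᵐ ω ∂μ, ∃ u, ω ∈ coveredBy u := by
  have := hμ.1
  have hlim : Tendsto (fun u => μ.real (coveredBy u)ᶜ) atTop (𝓝 0) := by
    simp_rw [probReal_compl_eq_one_sub (measurableSet_coveredBy _), hμ.measureReal_coveredBy]
    simpa using ((tendsto_coverProb hN).pow C).const_sub 1
  have hnever : μ.real {ω | ¬∃ u, ω ∈ coveredBy u} ≤ 0 :=
    ge_of_tendsto' hlim fun u => measureReal_mono fun _ hω h => hω ⟨u, h⟩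
  exact ae_iff.2 <| (measureReal_eq_zero_iff).1 (hnever.antisymm measureReal_nonneg)

theorem ae_lt_coverTime (hμ : IsCouponMeasure μ) (hN : 0 < N) (u : ℕ) :
    ∀ᵐ ω ∂μ, ω ∈ (coveredBy u)ᶜ → u < coverTime ω := by
  filter_upwards [hμ.ae_exists_mem_coveredBy hN] with ω ⟨M, hM⟩ using lt_coverTime hM

theorem half_le_measure_compl_coveredBy (hμ : IsCouponMeasure μ) (hN : 2 ≤ N) (hC : 1 ≤ C)
    {u : ℕ} (hu : (u : ℝ) ≤ couponThreshold N C) :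
    ENNReal.ofReal (1 / 2) ≤ μ (coveredBy u)ᶜ := by
  have := hμ.1
  have hN' : (2 : ℝ) ≤ N := by exact_mod_cast hN
  have hcov : coverProb N u ^ C ≤ 1 / 2 :=
    calc coverProb N u ^ C ≤ (1 - ((N - 1) / N) ^ u) ^ C :=
          pow_le_pow_left₀ (coverProb_nonneg u) (coverProb_le (by omega) u) C
      _ ≤ 1 / 2 := by
        refine one_sub_pow_le_half (pow_le_one₀ ?_ ?_) (log_two_le_mul_pow hN hC hu)
        · exact div_nonneg (by linarith) (by linarith)
        · exact div_le_one_of_le₀ (by linarith) (by linarith)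
  rw [← ofReal_measureReal, probReal_compl_eq_one_sub (measurableSet_coveredBy u),
    hμ.measureReal_coveredBy]
  exact ENNReal.ofReal_le_ofReal (by linarith)

theorem half_le_measure_le_coverTime (hμ : IsCouponMeasure μ) (hN : 2 ≤ N) (hC : 1 ≤ C)
    {t : ℕ} (ht : (t : ℝ) ≤ couponThreshold N C) :
    ENNReal.ofReal (1 / 2) ≤ μ {ω | t ≤ coverTime ω} :=
  (hμ.half_le_measure_compl_coveredBy hN hC ht).trans <|
    measure_mono_ae <| (hμ.ae_lt_coverTime (by omega) t).mono fun _ h hω => (h hω).le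

theorem couponThreshold_div_two_le_lintegral_coverTime (hμ : IsCouponMeasure μ) (hN : 2 ≤ N)
    (hC : 1 ≤ C) :
    ENNReal.ofReal (couponThreshold N C / 2) ≤ ∫⁻ ω, (coverTime ω : ℝ≥0∞) ∂μ := by
  set u := ⌊couponThreshold N C⌋₊
  have hu : (u : ℝ) ≤ couponThreshold N C := Nat.floor_le (couponThreshold_nonneg hN hC)
  calc ENNReal.ofReal (couponThreshold N C / 2) ≤ ENNReal.ofReal ((u + 1) * (1 / 2)) :=
        ENNReal.ofReal_le_ofReal (by linarith [Nat.lt_floor_add_one (couponThreshold N C)])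
    _ = (u + 1) * ENNReal.ofReal (1 / 2) := by
        rw [ENNReal.ofReal_mul (by positivity)]; norm_cast
    _ ≤ (u + 1) * μ (coveredBy u)ᶜ := by
        gcongr; exact hμ.half_le_measure_compl_coveredBy hN hC hu
    _ = ∫⁻ ω, (coveredBy u)ᶜ.indicator (fun _ => (u + 1 : ℝ≥0∞)) ω ∂μ :=
        (lintegral_indicator_const (measurableSet_coveredBy u).compl _).symm
    _ ≤ ∫⁻ ω, (coverTime ω : ℝ≥0∞) ∂μ := by
        refine lintegral_mono_ae <| (hμ.ae_lt_coverTime (by omega) u).mono fun ω h => ?_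
        exact Set.indicator_apply_le' (fun hω => by exact_mod_cast h hω) fun _ => zero_le

end IsCouponMeasure

/-- In the parallel coupon collector problem with `N ≥ 2`
coupon types and `C ≥ 1` collectors, with
`t₀ = log (C / log 2) / log (N / (N - 1))`, every natural number `t ≤ t₀`
satisfies `P(T(N, C) ≥ t) ≥ 1/2`; consequently
`E[T(N, C)] ≥ t₀ / 2 = log (C / log 2) / (2 * log (N / (N - 1)))`. -/
theorem coupon_median_and_expectation_bound
    (N C : ℕ) (hN : 2 ≤ N) (hC : 1 ≤ C)
    (μ : Measure (ℕ → Fin C → Fin N)) (hμ : IsCouponMeasure μ) :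
    (∀ t : ℕ, (t : ℝ) ≤
        Real.log ((C : ℝ) / Real.log 2) / Real.log ((N : ℝ) / ((N : ℝ) - 1)) →
        ENNReal.ofReal (1 / 2) ≤ μ {ω | t ≤ coverTime ω}) ∧
      ENNReal.ofReal
          (Real.log ((C : ℝ) / Real.log 2) /
            (2 * Real.log ((N : ℝ) / ((N : ℝ) - 1)))) ≤
        ∫⁻ ω, (coverTime ω : ℝ≥0∞) ∂μ := by
  refine ⟨fun t ht => hμ.half_le_measure_le_coverTime hN hC ht, ?_⟩
  rw [mul_comm, ← div_div]
  exact hμ.couponThreshold_div_two_le_lintegral_coverTime hN hC
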